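/- Let m ∈ ℕ, ζ ∈ ℝ and ν < −m−1. Let χ : ℝ → ℝ be smooth with 0 ≤ χ ≤ 1, χ = 0 on (−∞,1] and χ = 1 on [2,∞). Let f : ℝ → ℂ be smooth with sup_{λ∈ℝ} (1+|λ|)^{ℓ−ν} |f^{(ℓ)}(λ)| < ∞ for every ℓ ∈ ℕ, and set b(λ) = ζ · χ(λ) · λ^{−m−1−iζ} + f(λ). Then for every x with 0 < |x| < 1/2 the improper integral K(x) = lim_{T→∞} ∫_{−T}^{T} b(λ) (iλ)^m e^{iλx} dλ exists, and there exists a constant C ≥ 0, depending only on m, ν and χ (but not on ζ, f or x), such that |K(x)| ≤ C · ( 1 + ζ² + sup_{λ∈ℝ} (1+|λ|)^{−ν} |f(λ)| ) for every 0 < |x| < 1/2. -/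

import Mathlib

/-!
Multiplying out, the integrand is `iᵐ ζ χ(λ) λ^w e^{iλx}` with `w = -1 - iζ`, plus
`f(λ) (iλ)ᵐ e^{iλx}`. With `S = sup (1+|λ|)^(-ν) |f(λ)|` the second part is bounded by
`S (1+|λ|)^(ν+m)`, which is integrable because `ν + m < -1`.

For the first part put `R = 1/|x| > 2`. On `[R, ∞)` one integration by parts against `e^{iλx}`
gives a convergent improper integral of size at most `1 + |w|`. On `[1, R]` write
`e^{iλx} = 1 + O(λ|x|)`: the error term contributes at most `R|x| = 1`, and the main term is
bounded on `[1, 2]`, while on `[2, R]` it is `[λ^(w+1)/(w+1)]`, of size at most `2/|ζ|` because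
`Re (w+1) = 0`. After multiplication by `ζ` everything is `O(1 + ζ²)`.
-/

open Filter MeasureTheory Set intervalIntegral Topology

lemma norm_exp_I_mul_ofReal_mul (l x : ℝ) : ‖Complex.exp (Complex.I * l * x)‖ = 1 := by
  rw [mul_assoc, ← Complex.ofReal_mul]
  exact Complex.norm_exp_I_mul_ofReal _

lemma continuous_exp_I_mul_ofReal_mul (x : ℝ) :
    Continuous fun l : ℝ => Complex.exp (Complex.I * l * x) := by
  fun_prop

lemma hasDerivAt_exp_I_mul_ofReal_mul_div {x : ℝ} (hx : x ≠ 0) (l : ℝ) :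
    HasDerivAt (fun y : ℝ => Complex.exp (Complex.I * y * x) / (Complex.I * x))
      (Complex.exp (Complex.I * l * x)) l := by
  have hIx : Complex.I * x ≠ 0 := by simp [hx]
  have h := ((((hasDerivAt_id (l : ℂ)).const_mul Complex.I).mul_const (x : ℂ)).cexp.comp_ofReal
    (z := l)).div_const (Complex.I * x)
  simpa [mul_div_cancel_right₀ _ hIx] using h

lemma norm_ofReal_cpow_of_re_eq_neg_one {w : ℂ} (hw : w.re = -1) {l : ℝ} (hl : 0 < l) :
    ‖(l : ℂ) ^ w‖ = l⁻¹ := by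
  rw [Complex.norm_cpow_eq_rpow_re_of_pos hl, hw, Real.rpow_neg_one]

lemma norm_integral_cpow_le_of_re_eq_neg_one {w : ℂ} (hw : w.re = -1) (hw1 : w ≠ -1)
    {a b : ℝ} (ha : 0 < a) (hb : 0 < b) :
    ‖∫ l in a..b, (l : ℂ) ^ w‖ ≤ 2 / ‖w + 1‖ := by
  have h0 : (0 : ℝ) ∉ uIcc a b := fun h => by
    rcases le_total a b with hab | hab
    · rw [uIcc_of_le hab] at h; linarith [h.1]
    · rw [uIcc_of_ge hab] at h; linarith [h.1]
  have hunit : ∀ c : ℝ, 0 < c → ‖(c : ℂ) ^ (w + 1)‖ = 1 := fun c hc => by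
    rw [Complex.norm_cpow_eq_rpow_re_of_pos hc]; simp [hw]
  rw [integral_cpow (Or.inr ⟨hw1, h0⟩), norm_div]
  gcongr
  calc ‖(b : ℂ) ^ (w + 1) - (a : ℂ) ^ (w + 1)‖
      ≤ ‖(b : ℂ) ^ (w + 1)‖ + ‖(a : ℂ) ^ (w + 1)‖ := norm_sub_le _ _
    _ = 2 := by rw [hunit b hb, hunit a ha]; norm_num

lemma continuousOn_cpow_mul_exp (s : ℂ) (x : ℝ) :
    ContinuousOn (fun l : ℝ => (l : ℂ) ^ s * Complex.exp (Complex.I * l * x)) (Ioi 0) :=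
  fun l hl => ((Complex.continuousAt_ofReal_cpow_const l s (Or.inr (ne_of_gt hl))).mul
    (continuous_exp_I_mul_ofReal_mul x).continuousAt).continuousWithinAt

lemma integral_cpow_mul_exp_eq {w : ℂ} (hw : w ≠ 0) {x : ℝ} (hx : x ≠ 0) {R T : ℝ} (hR : 0 < R)
    (hT : R ≤ T) :
    ∫ l in R..T, (l : ℂ) ^ w * Complex.exp (Complex.I * l * x)
      = ((T : ℂ) ^ w * Complex.exp (Complex.I * T * x)
          - (R : ℂ) ^ w * Complex.exp (Complex.I * R * x)) / (Complex.I * x)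
        - w / (Complex.I * x) *
          ∫ l in R..T, (l : ℂ) ^ (w - 1) * Complex.exp (Complex.I * l * x) := by
  have hpos : uIcc R T ⊆ Ioi 0 := fun l hl => by
    rw [uIcc_of_le hT] at hl; exact hR.trans_le hl.1
  have hderiv : IntervalIntegrable (fun l : ℝ => w * (l : ℂ) ^ (w - 1)) volume R T :=
    (continuousOn_const.mul fun l hl => (Complex.continuousAt_ofReal_cpow_const l (w - 1)
      (Or.inr (ne_of_gt (hpos hl)))).continuousWithinAt).intervalIntegrable
  rw [intervalIntegral.integral_mul_deriv_eq_deriv_mul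
    (fun l hl => hasDerivAt_ofReal_cpow_const (ne_of_gt (hpos hl)) hw)
    (fun l _ => hasDerivAt_exp_I_mul_ofReal_mul_div hx l) hderiv
    ((continuous_exp_I_mul_ofReal_mul x).intervalIntegrable _ _),
    ← intervalIntegral.integral_const_mul]
  congr 1
  · ring
  · congr 1 with l; ring

lemma norm_cpow_mul_exp_of_pos (s : ℂ) (x : ℝ) {l : ℝ} (hl : 0 < l) :
    ‖(l : ℂ) ^ s * Complex.exp (Complex.I * l * x)‖ = l ^ s.re := by
  rw [norm_mul, norm_exp_I_mul_ofReal_mul, mul_one, Complex.norm_cpow_eq_rpow_re_of_pos hl]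

lemma integrableOn_Ioi_cpow_mul_exp {s : ℂ} (hs : s.re < -1) (x : ℝ) {R : ℝ} (hR : 0 < R) :
    IntegrableOn (fun l : ℝ => (l : ℂ) ^ s * Complex.exp (Complex.I * l * x)) (Ioi R) :=
  (integrableOn_Ioi_rpow_of_lt hs hR).mono'
    (((continuousOn_cpow_mul_exp s x).mono (Ioi_subset_Ioi hR.le)).aestronglyMeasurable
      measurableSet_Ioi)
    ((ae_restrict_iff' measurableSet_Ioi).2 <| ae_of_all _ fun _ hl =>
      (norm_cpow_mul_exp_of_pos s x (hR.trans hl)).le)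

lemma norm_integral_Ioi_cpow_mul_exp_le {s : ℂ} (hs : s.re < -1) (x : ℝ) {R : ℝ} (hR : 0 < R) :
    ‖∫ l in Ioi R, (l : ℂ) ^ s * Complex.exp (Complex.I * l * x)‖
      ≤ R ^ (s.re + 1) / -(s.re + 1) := by
  calc _ ≤ ∫ l in Ioi R, l ^ s.re :=
        norm_integral_le_of_norm_le (integrableOn_Ioi_rpow_of_lt hs hR)
          ((ae_restrict_iff' measurableSet_Ioi).2 <| ae_of_all _ fun _ hl =>
            (norm_cpow_mul_exp_of_pos s x (hR.trans hl)).le)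
    _ = R ^ (s.re + 1) / -(s.re + 1) := by rw [integral_Ioi_rpow_of_lt hs hR, neg_div, div_neg]

theorem exists_tendsto_integral_cpow_mul_exp {w : ℂ} (hw : w.re < 0) {x R : ℝ} (hx : x ≠ 0)
    (hR : 0 < R) :
    ∃ L : ℂ, Tendsto (fun T => ∫ l in R..T, (l : ℂ) ^ w * Complex.exp (Complex.I * l * x))
        atTop (𝓝 L) ∧
      ‖L‖ ≤ R ^ w.re / |x| * (1 + ‖w‖ / -w.re) := by
  have hw0 : w ≠ 0 := fun h => by simp [h] at hw
  have hIx : ‖Complex.I * x‖ = |x| := by simp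
  have hre : (w - 1).re < -1 := by simp; linarith
  have hint := integrableOn_Ioi_cpow_mul_exp hre x hR
  have hJ := norm_integral_Ioi_cpow_mul_exp_le hre x hR
  simp only [Complex.sub_re, Complex.one_re, sub_add_cancel] at hJ
  have hboundary :
      Tendsto (fun T : ℝ => (T : ℂ) ^ w * Complex.exp (Complex.I * T * x)) atTop (𝓝 0) := by
    refine squeeze_zero_norm' ?_ (tendsto_rpow_neg_atTop (neg_pos.2 hw))
    filter_upwards [eventually_gt_atTop 0] with T hT
    rw [norm_cpow_mul_exp_of_pos w x hT, neg_neg]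
  have hlim := ((hboundary.sub_const ((R : ℂ) ^ w * Complex.exp (Complex.I * R * x))).div_const
    (Complex.I * x)).sub
    ((intervalIntegral_tendsto_integral_Ioi R hint tendsto_id).const_mul (w / (Complex.I * x)))
  refine ⟨_, hlim.congr' ?_, ?_⟩
  · filter_upwards [eventually_ge_atTop R] with T hT
    exact (integral_cpow_mul_exp_eq hw0 hx hR hT).symm
  · calc _ ≤ ‖(R : ℂ) ^ w * Complex.exp (Complex.I * R * x)‖ / |x|
          + ‖w‖ / |x| * (R ^ w.re / -w.re) := by
          refine (norm_sub_le _ _).trans (add_le_add ?_ ?_)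
          · rw [zero_sub, norm_div, norm_neg, hIx]
          · rw [norm_mul, norm_div, hIx]; gcongr
      _ = R ^ w.re / |x| * (1 + ‖w‖ / -w.re) := by
          rw [norm_cpow_mul_exp_of_pos w x hR]
          ring

lemma norm_integral_mul_exp_sub_one_le {g : ℝ → ℂ} (hg : ∀ l, 1 ≤ l → ‖g l‖ ≤ l⁻¹) (x : ℝ)
    {R : ℝ} (hR : 1 ≤ R) :
    ‖∫ l in (1 : ℝ)..R, g l * (Complex.exp (Complex.I * l * x) - 1)‖ ≤ R * |x| := by
  have hpt : ∀ l ∈ uIoc (1 : ℝ) R, ‖g l * (Complex.exp (Complex.I * l * x) - 1)‖ ≤ |x| := by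
    intro l hl
    rw [uIoc_of_le hR] at hl
    have hl0 : 0 < l := by linarith [hl.1]
    have hexp : ‖Complex.exp (Complex.I * l * x) - 1‖ ≤ l * |x| := by
      have := Real.norm_exp_I_mul_ofReal_sub_one_le (x := l * x)
      rwa [Complex.ofReal_mul, ← mul_assoc, Real.norm_eq_abs, abs_mul, abs_of_pos hl0] at this
    calc ‖g l * (Complex.exp (Complex.I * l * x) - 1)‖ ≤ l⁻¹ * (l * |x|) := by
          rw [norm_mul]; gcongr; exact hg l hl.1.le
      _ = |x| := by field_simp
  calc _ ≤ |x| * |R - 1| := norm_integral_le_of_norm_le_const hpt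
    _ ≤ R * |x| := by rw [abs_of_nonneg (by linarith : (0 : ℝ) ≤ R - 1)]; nlinarith [abs_nonneg x]

section Cutoff

variable {χ : ℝ → ℝ}

lemma continuous_cutoff_mul_cpow (hχ : Continuous χ) (hχ0 : ∀ l ≤ 1, χ l = 0) (w : ℂ) :
    Continuous fun l : ℝ => (χ l : ℂ) * (l : ℂ) ^ w := by
  refine continuous_iff_continuousAt.2 fun l₀ => ?_
  rcases lt_or_ge l₀ 1 with h | h
  · refine (continuousAt_const (y := (0 : ℂ))).congr ?_
    filter_upwards [Iio_mem_nhds h] with l hl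
    simp [hχ0 l hl.le]
  · exact (Complex.continuous_ofReal.comp hχ).continuousAt.mul
      (Complex.continuousAt_ofReal_cpow_const _ _ (Or.inr (by linarith)))

lemma norm_integral_cutoff_mul_cpow_mul_exp_le (hχ : Continuous χ) (hχ_le : ∀ l, |χ l| ≤ 1)
    (hχ0 : ∀ l ≤ 1, χ l = 0) (hχ1 : ∀ l, 2 ≤ l → χ l = 1) {w : ℂ} (hw : w.re = -1)
    (hw1 : w ≠ -1) {x R : ℝ} (hR : 2 ≤ R) (hRx : R * |x| ≤ 1) :
    ‖∫ l in (1 : ℝ)..R, (χ l : ℂ) * (l : ℂ) ^ w * Complex.exp (Complex.I * l * x)‖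
      ≤ 2 + 2 / ‖w + 1‖ := by
  set g : ℝ → ℂ := fun l => (χ l : ℂ) * (l : ℂ) ^ w
  have hg : Continuous g := continuous_cutoff_mul_cpow hχ hχ0 w
  have hg_le : ∀ l, 1 ≤ l → ‖g l‖ ≤ l⁻¹ := fun l hl => by
    rw [norm_mul, Complex.norm_real, Real.norm_eq_abs,
      norm_ofReal_cpow_of_re_eq_neg_one hw (by linarith)]
    exact mul_le_of_le_one_left (by positivity) (hχ_le l)
  have hosc := (norm_integral_mul_exp_sub_one_le hg_le x (by linarith)).trans hRx
  have htransition : ‖∫ l in (1 : ℝ)..2, g l‖ ≤ 1 := by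
    have hpt : ∀ l ∈ uIoc (1 : ℝ) 2, ‖g l‖ ≤ 1 := fun l hl => by
      rw [uIoc_of_le (by norm_num)] at hl
      exact (hg_le l hl.1.le).trans (inv_le_one_of_one_le₀ hl.1.le)
    simpa using (norm_integral_le_of_norm_le_const hpt).trans_eq (by norm_num)
  have hhomogeneous : ∫ l in (2 : ℝ)..R, g l = ∫ l in (2 : ℝ)..R, (l : ℂ) ^ w := by
    refine integral_congr fun l hl => ?_
    rw [uIcc_of_le hR] at hl
    simp [g, hχ1 l hl.1]
  have hsplit : ∫ l in (1 : ℝ)..R, g l * Complex.exp (Complex.I * l * x)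
      = (∫ l in (1 : ℝ)..R, g l * (Complex.exp (Complex.I * l * x) - 1))
        + ((∫ l in (1 : ℝ)..2, g l) + ∫ l in (2 : ℝ)..R, g l) := by
    have hcont : Continuous fun l : ℝ => g l * (Complex.exp (Complex.I * l * x) - 1) :=
      hg.mul ((continuous_exp_I_mul_ofReal_mul x).sub continuous_const)
    rw [integral_add_adjacent_intervals (hg.intervalIntegrable 1 2) (hg.intervalIntegrable 2 R),
      ← integral_add (hcont.intervalIntegrable 1 R) (hg.intervalIntegrable 1 R)]
    congr 1 with l
    ring
  calc _ = ‖∫ l in (1 : ℝ)..R, g l * Complex.exp (Complex.I * l * x)‖ := rfl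
    _ ≤ 1 + (1 + 2 / ‖w + 1‖) := by
      rw [hsplit, hhomogeneous]
      refine (norm_add_le _ _).trans (add_le_add hosc ((norm_add_le _ _).trans ?_))
      exact add_le_add htransition
        (norm_integral_cpow_le_of_re_eq_neg_one hw hw1 two_pos (by linarith))
    _ = 2 + 2 / ‖w + 1‖ := by ring

lemma integral_cutoff_mul_cpow_mul_exp_eq (hχ : Continuous χ) (hχ0 : ∀ l ≤ 1, χ l = 0)
    (hχ1 : ∀ l, 2 ≤ l → χ l = 1) (w : ℂ) (x : ℝ) {R T : ℝ} (hR : 2 ≤ R) (hT : R ≤ T) :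
    ∫ l in (-T)..T, (χ l : ℂ) * (l : ℂ) ^ w * Complex.exp (Complex.I * l * x)
      = (∫ l in (1 : ℝ)..R, (χ l : ℂ) * (l : ℂ) ^ w * Complex.exp (Complex.I * l * x))
        + ∫ l in R..T, (l : ℂ) ^ w * Complex.exp (Complex.I * l * x) := by
  have hG : Continuous fun l : ℝ => (χ l : ℂ) * (l : ℂ) ^ w * Complex.exp (Complex.I * l * x) :=
    (continuous_cutoff_mul_cpow hχ hχ0 w).mul (continuous_exp_I_mul_ofReal_mul x)
  have hleft : ∫ l in (-T)..1, (χ l : ℂ) * (l : ℂ) ^ w * Complex.exp (Complex.I * l * x) = 0 := by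
    rw [← integral_zero (a := -T) (b := 1) (μ := volume) (E := ℂ)]
    refine integral_congr fun l hl => ?_
    rw [uIcc_of_le (by linarith)] at hl
    simp [hχ0 l hl.2]
  have hright : ∫ l in R..T, (χ l : ℂ) * (l : ℂ) ^ w * Complex.exp (Complex.I * l * x)
      = ∫ l in R..T, (l : ℂ) ^ w * Complex.exp (Complex.I * l * x) := by
    refine integral_congr fun l hl => ?_
    rw [uIcc_of_le hT] at hl
    simp [hχ1 l (hR.trans hl.1)]
  rw [← integral_add_adjacent_intervals (hG.intervalIntegrable (-T) 1) (hG.intervalIntegrable 1 T),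
    ← integral_add_adjacent_intervals (hG.intervalIntegrable 1 R) (hG.intervalIntegrable R T),
    hleft, hright, zero_add]

theorem exists_tendsto_integral_cutoff_mul_cpow_mul_exp (hχ : Continuous χ)
    (hχ_le : ∀ l, |χ l| ≤ 1) (hχ0 : ∀ l ≤ 1, χ l = 0) (hχ1 : ∀ l, 2 ≤ l → χ l = 1) {w : ℂ}
    (hw : w.re = -1) (hw1 : w ≠ -1) {x : ℝ} (hx0 : 0 < |x|) (hx : |x| < 1 / 2) :
    ∃ L : ℂ, Tendsto (fun T => ∫ l in (-T)..T,
        (χ l : ℂ) * (l : ℂ) ^ w * Complex.exp (Complex.I * l * x)) atTop (𝓝 L) ∧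
      ‖L‖ ≤ 3 + ‖w‖ + 2 / ‖w + 1‖ := by
  set R := |x|⁻¹
  have hR : 2 ≤ R := by
    rw [le_inv_comm₀ two_pos hx0]; linarith
  have hRx : R * |x| = 1 := inv_mul_cancel₀ hx0.ne'
  obtain ⟨L, hL, hLle⟩ := exists_tendsto_integral_cpow_mul_exp (w := w) (by rw [hw]; norm_num)
    (abs_pos.1 hx0) (by positivity : 0 < R)
  have hLle' : ‖L‖ ≤ 1 + ‖w‖ := by
    rwa [hw, Real.rpow_neg_one, inv_inv, div_self hx0.ne', one_mul, neg_neg, div_one] at hLle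
  refine ⟨(∫ l in (1 : ℝ)..R, (χ l : ℂ) * (l : ℂ) ^ w * Complex.exp (Complex.I * l * x)) + L,
    (hL.const_add _).congr' ?_, ?_⟩
  · filter_upwards [eventually_ge_atTop R] with T hT
    exact (integral_cutoff_mul_cpow_mul_exp_eq hχ hχ0 hχ1 w x hR hT).symm
  · refine (norm_add_le _ _).trans ?_
    linarith [norm_integral_cutoff_mul_cpow_mul_exp_le hχ hχ_le hχ0 hχ1 hw hw1 hR hRx.le]

theorem exists_tendsto_mul_integral_cutoff_mul_cpow_mul_exp (hχ : Continuous χ)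
    (hχ_le : ∀ l, |χ l| ≤ 1) (hχ0 : ∀ l ≤ 1, χ l = 0) (hχ1 : ∀ l, 2 ≤ l → χ l = 1) (ζ : ℝ)
    {x : ℝ} (hx0 : 0 < |x|) (hx : |x| < 1 / 2) :
    ∃ L : ℂ, Tendsto (fun T => (ζ : ℂ) * ∫ l in (-T)..T,
        (χ l : ℂ) * (l : ℂ) ^ (-1 - Complex.I * ζ) * Complex.exp (Complex.I * l * x))
        atTop (𝓝 L) ∧
      ‖L‖ ≤ 4 * (1 + ζ ^ 2) := by
  rcases eq_or_ne ζ 0 with rfl | hζ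
  · exact ⟨0, by simp, by simp⟩
  have hw1 : ‖-1 - Complex.I * ζ + 1‖ = |ζ| := by
    rw [show -1 - Complex.I * ζ + 1 = -(Complex.I * ζ) by ring]; simp
  have hw : ‖-1 - Complex.I * ζ‖ ≤ 1 + |ζ| := by
    simpa using norm_sub_le (-1 : ℂ) (Complex.I * ζ)
  obtain ⟨L, hL, hLle⟩ := exists_tendsto_integral_cutoff_mul_cpow_mul_exp hχ hχ_le hχ0 hχ1
    (w := -1 - Complex.I * ζ) (by simp) (by simpa using hζ) hx0 hx
  refine ⟨ζ * L, hL.const_mul _, ?_⟩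
  have hζ0 : 0 < |ζ| := abs_pos.2 hζ
  rw [hw1] at hLle
  rw [norm_mul, Complex.norm_real, Real.norm_eq_abs]
  calc |ζ| * ‖L‖ ≤ |ζ| * (3 + (1 + |ζ|) + 2 / |ζ|) := by gcongr; linarith
    _ = 4 * |ζ| + ζ ^ 2 + 2 := by field_simp; rw [← sq_abs]; ring
    _ ≤ 4 * (1 + ζ ^ 2) := by nlinarith [sq_nonneg (|ζ| - 1), sq_abs ζ]

end Cutoff

lemma integrable_one_add_abs_rpow {p : ℝ} (hp : p < -1) :
    Integrable fun l : ℝ => (1 + |l|) ^ p := by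
  simpa using integrable_one_add_norm (E := ℝ) (μ := volume) (r := -p) (by simp; linarith)

lemma norm_le_iSup_mul_rpow {E : Type*} [SeminormedAddCommGroup E] {f : ℝ → E} {ν : ℝ}
    (hf : BddAbove (range fun l => (1 + |l|) ^ (-ν) * ‖f l‖)) (l : ℝ) :
    ‖f l‖ ≤ (⨆ l, (1 + |l|) ^ (-ν) * ‖f l‖) * (1 + |l|) ^ ν := by
  calc ‖f l‖ = (1 + |l|) ^ (-ν) * ‖f l‖ * (1 + |l|) ^ ν := by
        rw [Real.rpow_neg (by positivity)]; field_simp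
    _ ≤ _ := by gcongr; exact le_ciSup hf l

theorem exists_tendsto_integral_mul_pow_mul_exp {f : ℝ → ℂ} (hf : Continuous f) {ν S : ℝ}
    {m : ℕ} (hν : ν + m < -1) (hfS : ∀ l, ‖f l‖ ≤ S * (1 + |l|) ^ ν) (x : ℝ) :
    ∃ K : ℂ, Tendsto (fun T => ∫ l in (-T)..T,
        f l * (Complex.I * l) ^ m * Complex.exp (Complex.I * l * x)) atTop (𝓝 K) ∧
      ‖K‖ ≤ S * ∫ l : ℝ, (1 + |l|) ^ (ν + m) := by
  have hbound : ∀ l : ℝ, ‖f l * (Complex.I * l) ^ m * Complex.exp (Complex.I * l * x)‖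
      ≤ S * (1 + |l|) ^ (ν + m) := fun l => by
    have hpow : |l| ^ m ≤ (1 + |l|) ^ (m : ℝ) := by
      rw [Real.rpow_natCast]; gcongr; linarith
    have hS : 0 ≤ S := nonneg_of_mul_nonneg_left ((norm_nonneg _).trans (hfS l)) (by positivity)
    calc _ = ‖f l‖ * |l| ^ m := by simp [norm_exp_I_mul_ofReal_mul]
      _ ≤ S * (1 + |l|) ^ ν * (1 + |l|) ^ (m : ℝ) := by gcongr; exact hfS l
      _ = S * (1 + |l|) ^ (ν + m) := by rw [mul_assoc, ← Real.rpow_add (by positivity)]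
  have hmajorant := (integrable_one_add_abs_rpow hν).const_mul S
  have hint : Integrable fun l : ℝ => f l * (Complex.I * l) ^ m * Complex.exp (Complex.I * l * x) :=
    hmajorant.mono' (by fun_prop) (ae_of_all _ hbound)
  refine ⟨_, intervalIntegral_tendsto_integral hint tendsto_neg_atTop_atBot tendsto_id, ?_⟩
  rw [← MeasureTheory.integral_const_mul]
  exact norm_integral_le_of_norm_le hmajorant (ae_of_all _ hbound)

lemma symbol_mul_eq {χ : ℝ → ℝ} (hχ0 : ∀ l ≤ 1, χ l = 0) (m : ℕ) (ζ : ℝ) (f : ℝ → ℂ) (x l : ℝ) :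
    ((ζ : ℂ) * (χ l : ℂ) * (l : ℂ) ^ (-(m : ℂ) - 1 - Complex.I * ζ) + f l) *
        (Complex.I * l) ^ m * Complex.exp (Complex.I * l * x)
      = Complex.I ^ m * ((ζ : ℂ) *
          ((χ l : ℂ) * (l : ℂ) ^ (-1 - Complex.I * ζ) * Complex.exp (Complex.I * l * x)))
        + f l * (Complex.I * l) ^ m * Complex.exp (Complex.I * l * x) := by
  rcases le_or_gt l 1 with hl | hl
  · simp [hχ0 l hl]
  have hl0 : (l : ℂ) ≠ 0 := Complex.ofReal_ne_zero.2 (by linarith)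
  have hcpow : (l : ℂ) ^ (-(m : ℂ) - 1 - Complex.I * ζ) * (l : ℂ) ^ m
      = (l : ℂ) ^ (-1 - Complex.I * ζ) := by
    rw [← Complex.cpow_natCast, ← Complex.cpow_add _ _ hl0]; ring_nf
  linear_combination (ζ : ℂ) * χ l * Complex.I ^ m * Complex.exp (Complex.I * l * x) * hcpow

lemma integral_symbol_mul_eq {χ : ℝ → ℝ} (hχ : Continuous χ) (hχ0 : ∀ l ≤ 1, χ l = 0)
    {f : ℝ → ℂ} (hf : Continuous f) (m : ℕ) (ζ x T : ℝ) :
    ∫ l in (-T)..T, ((ζ : ℂ) * (χ l : ℂ) * (l : ℂ) ^ (-(m : ℂ) - 1 - Complex.I * ζ) + f l) *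
        (Complex.I * l) ^ m * Complex.exp (Complex.I * l * x)
      = Complex.I ^ m * ((ζ : ℂ) * ∫ l in (-T)..T,
          (χ l : ℂ) * (l : ℂ) ^ (-1 - Complex.I * ζ) * Complex.exp (Complex.I * l * x))
        + ∫ l in (-T)..T, f l * (Complex.I * l) ^ m * Complex.exp (Complex.I * l * x) := by
  have hG : Continuous fun l : ℝ => (χ l : ℂ) * (l : ℂ) ^ (-1 - Complex.I * ζ) *
      Complex.exp (Complex.I * l * x) :=
    (continuous_cutoff_mul_cpow hχ hχ0 _).mul (continuous_exp_I_mul_ofReal_mul x)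
  have hF : Continuous fun l : ℝ =>
      f l * (Complex.I * l) ^ m * Complex.exp (Complex.I * l * x) := by
    fun_prop
  simp_rw [symbol_mul_eq hχ0]
  rw [integral_add ((hG.intervalIntegrable _ _).const_mul _ |>.const_mul _)
    (hF.intervalIntegrable _ _), intervalIntegral.integral_const_mul,
    intervalIntegral.integral_const_mul]

/-- Lemma A.3: for `b(λ) = ζ χ(λ) λ^{-m-1-iζ} + f(λ)` with `χ` a smooth cutoff
(`0 ≤ χ ≤ 1`, `χ = 0` on `(-∞,1]`, `χ = 1` on `[2,∞)`) and `f` an inhomogeneous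
symbol of order `ν < -m-1`, the improper integral
`K(x) = lim_{T→∞} ∫_{-T}^T b(λ)(iλ)^m e^{iλx} dλ` exists for `0 < |x| < 1/2`
and satisfies `|K(x)| ≤ C (1 + ζ² + sup_λ (1+|λ|)^{-ν}|f(λ)|)` with `C`
depending only on `m`, `ν` and `χ`. -/
theorem stmt11 (m : ℕ) (ν : ℝ) (hν : ν < -(m : ℝ) - 1)
    (χ : ℝ → ℝ) (hχ : ContDiff ℝ (⊤ : ℕ∞) χ)
    (hχ01 : ∀ l : ℝ, 0 ≤ χ l ∧ χ l ≤ 1)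
    (hχ0 : ∀ l : ℝ, l ≤ 1 → χ l = 0) (hχ1 : ∀ l : ℝ, 2 ≤ l → χ l = 1) :
    ∃ C : ℝ, 0 ≤ C ∧
      ∀ (ζ : ℝ) (f : ℝ → ℂ), ContDiff ℝ (⊤ : ℕ∞) f →
        (∀ ℓ : ℕ, ∃ M : ℝ, ∀ l : ℝ,
          (1 + |l|) ^ ((ℓ : ℝ) - ν) * ‖iteratedDeriv ℓ f l‖ ≤ M) →
        ∀ x : ℝ, 0 < |x| → |x| < 1 / 2 →
          ∃ K : ℂ,
            Tendsto (fun T : ℝ => ∫ l in (-T)..T,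
                ((ζ : ℂ) * (χ l : ℂ) * (l : ℂ) ^ (-(m : ℂ) - 1 - Complex.I * ζ) + f l) *
                  (Complex.I * l) ^ m * Complex.exp (Complex.I * l * x))
              atTop (nhds K) ∧
            ‖K‖ ≤
              C * (1 + ζ ^ 2 + ⨆ l : ℝ, (1 + |l|) ^ (-ν) * ‖f l‖) := by
  set I₀ := ∫ l : ℝ, (1 + |l|) ^ (ν + m)
  have hI₀ : 0 ≤ I₀ := integral_nonneg fun l => by positivity
  refine ⟨I₀ + 4, by positivity, fun ζ f hf hsym x hx0 hx => ?_⟩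
  have hχ_le : ∀ l, |χ l| ≤ 1 := fun l => abs_le.2 ⟨by linarith [(hχ01 l).1], (hχ01 l).2⟩
  obtain ⟨M, hM⟩ := hsym 0
  have hbdd : BddAbove (range fun l => (1 + |l|) ^ (-ν) * ‖f l‖) :=
    ⟨M, by rintro - ⟨l, rfl⟩; simpa using hM l⟩
  set S := ⨆ l, (1 + |l|) ^ (-ν) * ‖f l‖
  have hS : 0 ≤ S := (by positivity : (0 : ℝ) ≤ (1 + |0|) ^ (-ν) * ‖f 0‖).trans (le_ciSup hbdd 0)
  obtain ⟨L, hL, hLle⟩ := exists_tendsto_mul_integral_cutoff_mul_cpow_mul_exp hχ.continuous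
    hχ_le hχ0 hχ1 ζ hx0 hx
  obtain ⟨K, hK, hKle⟩ := exists_tendsto_integral_mul_pow_mul_exp hf.continuous (m := m)
    (by linarith) (norm_le_iSup_mul_rpow hbdd) x
  refine ⟨Complex.I ^ m * L + K, ((hL.const_mul _).add hK).congr fun T =>
    (integral_symbol_mul_eq hχ.continuous hχ0 hf.continuous m ζ x T).symm, ?_⟩
  calc ‖Complex.I ^ m * L + K‖ ≤ ‖L‖ + ‖K‖ := by simpa using norm_add_le (Complex.I ^ m * L) K
    _ ≤ 4 * (1 + ζ ^ 2) + S * I₀ := add_le_add hLle hKle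
    _ ≤ (I₀ + 4) * (1 + ζ ^ 2 + S) := by nlinarith [sq_nonneg ζ]
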